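/- arXiv:1008.4808 — 2 statements merged into one kernel-verified Lean document; each statement's English description precedes it below -/
import Mathlib

section
/- Let K be a linearly ordered field and let t ≥ 1. Then every nonzero polynomial f ∈ K[x] having at most t+1 nonzero terms has at most 2t roots in K \ {0} counted with multiplicities, i.e. the sum over all nonzero r ∈ K of the multiplicity of r as a root of f is at most 2t. Consequently B_m(t,K) = 2t. -/
/-!
By Descartes' rule of signs a polynomial has at most as many positive roots as sign changes in
its coefficient sequence, hence fewer than its number of terms; applied to `f(-x)`, which has the
same terms up to sign, the same bounds its negative roots. So `t + 1` terms allow at most `t`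
positive and `t` negative roots, and `(x² - 1)ᵗ`, with `t + 1` terms and roots `±1` of
multiplicity `t`, attains `2t`.
-/

open Finset Polynomial

namespace Polynomial

theorem signVariations_lt_card_support {R : Type*} [Semiring R] [LinearOrder R] {P : R[X]}
    (hP : P ≠ 0) : P.signVariations < #P.support := by
  induction h : #P.support generalizing P with
  | zero => simp_all
  | succ n ih =>
    by_cases hE : P.eraseLead = 0
    · obtain ⟨k, a, rfl⟩ :=
        card_support_le_one_iff_monomial.1 (card_support_le_one_of_eraseLead_eq_zero hE)
      simp
    · have := ih hE (by rw [← card_support_eraseLead_add_one hP] at h; omega)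
      have := signVariations_le_eraseLead_succ P
      omega

theorem support_comp_neg_X {R : Type*} [Ring R] (P : R[X]) :
    (P.comp (-X)).support = P.support := by
  ext n
  rw [← neg_one_mul (X : R[X]), ← C_1, ← C_neg]
  simp only [mem_support_iff, comp_C_mul_X_coeff, ne_eq, (isUnit_neg_one.pow n).mul_left_eq_zero]

theorem card_support_expand_le {R : Type*} [CommSemiring R] {p : ℕ} (hp : 0 < p) (P : R[X]) :
    #(expand R p P).support ≤ #P.support := by
  have hsub : (expand R p P).support ⊆ P.support.image (p * ·) := by
    intro n hn
    rw [mem_support_iff, coeff_expand hp] at hn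
    split_ifs at hn with hdvd
    · exact mem_image.2 ⟨n / p, mem_support_iff.2 hn, Nat.mul_div_cancel' hdvd⟩
    · exact absurd rfl hn
  exact (card_le_card hsub).trans card_image_le

theorem _root_.Multiset.card_filter_ne_zero {α : Type*} [Zero α] [LinearOrder α]
    (s : Multiset α) : (s.filter (· ≠ 0)).card = s.countP (0 < ·) + s.countP (· < 0) := by
  induction s using Multiset.induction_on with
  | empty => simp
  | cons a s ih =>
    rcases lt_trichotomy a 0 with h | rfl | h
    · simp [h, h.ne, h.not_gt, ih]; omega
    · simp [ih]
    · simp [h, h.ne', h.not_gt, ih]; omega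

section StrictOrderedRing

variable {R : Type*} [CommRing R] [LinearOrder R] [IsStrictOrderedRing R]

theorem roots_countP_neg_eq (P : R[X]) :
    P.roots.countP (· < 0) = (P.comp (-X)).roots.countP (0 < ·) := by
  rw [roots_comp_neg_X, Multiset.countP_map, Multiset.countP_eq_card_filter]
  simp

theorem roots_countP_pos_lt_card_support {P : R[X]} (hP : P ≠ 0) :
    P.roots.countP (0 < ·) < #P.support :=
  (roots_countP_pos_le_signVariations P).trans_lt (signVariations_lt_card_support hP)

theorem roots_countP_neg_lt_card_support {P : R[X]} (hP : P ≠ 0) :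
    P.roots.countP (· < 0) < #P.support := by
  rw [roots_countP_neg_eq, ← support_comp_neg_X P]
  exact roots_countP_pos_lt_card_support (comp_neg_X_eq_zero_iff.not.2 hP)

theorem card_roots_filter_ne_zero_le {P : R[X]} (hP : P ≠ 0) :
    (P.roots.filter (· ≠ 0)).card ≤ 2 * (#P.support - 1) := by
  have hpos := roots_countP_pos_lt_card_support hP
  have hneg := roots_countP_neg_lt_card_support hP
  rw [Multiset.card_filter_ne_zero]
  omega

end StrictOrderedRing

theorem card_support_X_sq_sub_one_pow_le {R : Type*} [CommRing R] (t : ℕ) :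
    #((X ^ 2 - 1 : R[X]) ^ t).support ≤ t + 1 := by
  have hexpand : expand R 2 ((X - 1) ^ t) = (X ^ 2 - 1 : R[X]) ^ t := by simp
  have hdeg : ((X - 1 : R[X]) ^ t).natDegree ≤ t := by
    simpa using natDegree_pow_le_of_le t (natDegree_X_sub_C_le (1 : R))
  calc #((X ^ 2 - 1 : R[X]) ^ t).support
      ≤ #((X - 1 : R[X]) ^ t).support := hexpand ▸ card_support_expand_le two_pos _
    _ ≤ #(range (((X - 1 : R[X]) ^ t).natDegree + 1)) :=
      card_le_card supp_subset_range_natDegree_succ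
    _ ≤ t + 1 := by simpa using hdeg

theorem card_roots_filter_ne_zero_X_sq_sub_one_pow {R : Type*} [CommRing R] [IsDomain R]
    [DecidableEq R] (t : ℕ) :
    (((X ^ 2 - 1 : R[X]) ^ t).roots.filter (· ≠ 0)).card = 2 * t := by
  have hfactor : (X ^ 2 - 1 : R[X]) = (X - C 1) * (X - C (-1)) := by simp; ring
  rw [roots_pow, hfactor, roots_mul (mul_ne_zero (X_sub_C_ne_zero 1) (X_sub_C_ne_zero _)),
    roots_X_sub_C, roots_X_sub_C, Multiset.filter_nsmul]
  simp [Multiset.filter_singleton]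
  ring

end Polynomial

theorem Bm_ordered_field_eq_two_mul_general (K : Type*) [Field K] [LinearOrder K] [IsStrictOrderedRing K] (t : ℕ) :
    (∀ f : Polynomial K, f ≠ 0 → f.support.card ≤ t + 1 →
      (f.roots.filter (fun r => r ≠ 0)).card ≤ 2 * t) ∧
    (∃ f : Polynomial K, f ≠ 0 ∧ f.support.card ≤ t + 1 ∧
      (f.roots.filter (fun r => r ≠ 0)).card = 2 * t) := by
  refine ⟨fun f hf hsupp => (card_roots_filter_ne_zero_le hf).trans (by omega), ?_⟩
  have hne : (X ^ 2 - 1 : K[X]) ^ t ≠ 0 := by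
    simpa using pow_ne_zero t (X_pow_sub_C_ne_zero two_pos (1 : K))
  exact ⟨_, hne, card_support_X_sq_sub_one_pow_le t,
    card_roots_filter_ne_zero_X_sq_sub_one_pow t⟩

/-- For a linearly ordered field `K` and `t ≥ 1`, every nonzero
polynomial with at most `t+1` nonzero terms has at most `2t` roots in `K \ {0}`
counted with multiplicities, and this bound is attained; hence `B_m(t,K) = 2t`. -/
theorem Bm_ordered_field_eq_two_mul (K : Type*) [Field K] [LinearOrder K] [IsStrictOrderedRing K] (t : ℕ) (ht : 1 ≤ t) :
    (∀ f : Polynomial K, f ≠ 0 → f.support.card ≤ t + 1 →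
      (f.roots.filter (fun r => r ≠ 0)).card ≤ 2 * t) ∧
    (∃ f : Polynomial K, f ≠ 0 ∧ f.support.card ≤ t + 1 ∧
      (f.roots.filter (fun r => r ≠ 0)).card = 2 * t) :=
  Bm_ordered_field_eq_two_mul_general K t
end

section
/- Let L be a field equipped with a non-archimedean additive valuation v : L → ℝ ∪ {∞} such that v(n·1_L) = 0 for every nonzero integer n, with valuation ring A = {v ≥ 0}, maximal ideal M = {v > 0}, and residue field K = A/M. Let t ≥ 1 and b ∈ ℕ. If every nonzero polynomial in K[x] with at most t+1 nonzero terms has at most b roots in K \ {0} counted with multiplicities, then every nonzero polynomial in L[x] with at most t+1 nonzero terms has at most t²·b roots in L \ {0} counted with multiplicities. The same implication holds with distinct roots in place of roots counted with multiplicities on both sides. In other words, B₁(t,L) ≤ t²·B₁(t,K) and B_m(t,L) ≤ t²·B_m(t,K). -/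
open scoped Classical

/-- The valuation ring `A = {x : 0 ≤ v x}` of a non-archimedean additive
valuation `v : L → ℝ ∪ {∞}`. -/
def valRing (L : Type*) [Field L] (v : L → WithTop ℝ)
    (hv0 : ∀ x, v x = ⊤ ↔ x = 0)
    (hvmul : ∀ x y, v (x * y) = v x + v y)
    (hvadd : ∀ x y, min (v x) (v y) ≤ v (x + y)) : Subring L where
  carrier := {x | 0 ≤ v x}
  zero_mem' := by
    simp only [Set.mem_setOf_eq, (hv0 0).mpr rfl]
    exact le_top
  one_mem' := by
    simp only [Set.mem_setOf_eq]
    have h := hvmul 1 1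
    rw [one_mul] at h
    by_cases hT : v 1 = ⊤
    · rw [hT]; exact le_top
    · obtain ⟨a, ha⟩ := WithTop.ne_top_iff_exists.mp hT
      rw [← ha] at h ⊢
      rw [← WithTop.coe_add, WithTop.coe_eq_coe] at h
      have : a = 0 := by linarith
      simp [this]
  add_mem' := fun hx hy => le_trans (le_min hx hy) (hvadd _ _)
  mul_mem' := fun {x y} hx hy => by
    have h := hvmul x y
    simp only [Set.mem_setOf_eq] at *
    rw [h]
    exact add_nonneg hx hy
  neg_mem' := fun {x} hx => by
    simp only [Set.mem_setOf_eq] at *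
    have hone : (0 : WithTop ℝ) ≤ v 1 := by
      have h := hvmul 1 1
      rw [one_mul] at h
      by_cases hT : v 1 = ⊤
      · rw [hT]; exact le_top
      · obtain ⟨a, ha⟩ := WithTop.ne_top_iff_exists.mp hT
        rw [← ha] at h ⊢
        rw [← WithTop.coe_add, WithTop.coe_eq_coe] at h
        have : a = 0 := by linarith
        simp [this]
    have h := hvmul (-1) x
    rw [neg_one_mul] at h
    rw [h]
    have hm1 : (0 : WithTop ℝ) ≤ v (-1) := by
      have h2 := hvmul (-1) (-1)
      rw [neg_one_mul, neg_neg] at h2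
      by_cases hT : v (-1) = ⊤
      · rw [hT]; exact le_top
      · obtain ⟨a, ha⟩ := WithTop.ne_top_iff_exists.mp hT
        rw [← ha]
        have h3 := hvmul 1 1
        rw [one_mul] at h3
        have h1T : v 1 ≠ ⊤ := by
          intro habs
          exact one_ne_zero ((hv0 1).mp habs)
        obtain ⟨b, hb⟩ := WithTop.ne_top_iff_exists.mp h1T
        rw [← hb, ← ha, ← WithTop.coe_add, WithTop.coe_eq_coe] at h2
        rw [← hb, ← WithTop.coe_add, WithTop.coe_eq_coe] at h3
        have hb0 : b = 0 := by linarith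
        have ha0 : a = 0 := by rw [hb0] at h2; linarith
        simp [ha0]
    exact add_nonneg hm1 hx

/-- The maximal ideal `M = {x : 0 < v x}` of the valuation ring. -/
def valIdeal (L : Type*) [Field L] (v : L → WithTop ℝ)
    (hv0 : ∀ x, v x = ⊤ ↔ x = 0)
    (hvmul : ∀ x y, v (x * y) = v x + v y)
    (hvadd : ∀ x y, min (v x) (v y) ≤ v (x + y)) :
    Ideal (valRing L v hv0 hvmul hvadd) where
  carrier := {x | 0 < v (x : L)}
  zero_mem' := by
    simp only [Set.mem_setOf_eq, ZeroMemClass.coe_zero, (hv0 0).mpr rfl]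
    exact WithTop.coe_lt_top 0
  add_mem' := fun {x y} hx hy =>
    lt_of_lt_of_le (lt_min hx hy) (hvadd _ _)
  smul_mem' := fun c x hx => by
    simp only [Set.mem_setOf_eq, smul_eq_mul, Subring.coe_mul] at *
    rw [hvmul]
    calc (0 : WithTop ℝ) < v (x : L) := hx
      _ = 0 + v (x : L) := (zero_add _).symm
      _ ≤ v (c : L) + v (x : L) := add_le_add c.2 le_rfl

/-!
By the Newton polygon, the nonzero roots of a polynomial over `L` with at most `t + 1` terms
take at most `t` distinct valuations. The roots of a given valuation `v c` become, after the
substitution `x ↦ c x` and division by a coefficient of least valuation, roots of valuation `0`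
of a polynomial over the valuation ring whose reduction to `K` is nonzero and still has at most
`t + 1` terms; their residues are nonzero roots of that reduction, with at least the same
multiplicities. Hence each valuation class holds at most `b` roots counted with multiplicity.
For distinct roots, each class gives at most `b` residues, each of multiplicity at most `t`:
in characteristic zero a nonzero root of a polynomial with `k` terms has multiplicity `< k`,
as one sees by repeatedly dividing by `X` and differentiating.
-/

open Polynomial Finset

theorem Multiset.card_le_mul_card_toFinset {α : Type*} [DecidableEq α] {s : Multiset α} {n : ℕ}
    (h : ∀ a ∈ s, s.count a ≤ n) : Multiset.card s ≤ n * #s.toFinset := by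
  rw [← Multiset.toFinset_sum_count_eq, mul_comm]
  exact Finset.sum_le_card_nsmul _ _ _ fun a ha => h a (Multiset.mem_toFinset.mp ha)

namespace Polynomial

theorem card_support_X_mul {R : Type*} [Semiring R] (p : R[X]) : #(X * p).support = #p.support := by
  have : (X * p).support = p.support.map (addRightEmbedding 1) := by
    ext (_ | n) <;> simp [coeff_X_mul, mul_coeff_zero]
  rw [this, card_map]

theorem card_support_derivative_lt {R : Type*} [Semiring R] {p : R[X]} (h : p.coeff 0 ≠ 0) :
    #(derivative p).support < #p.support := by
  calc #(derivative p).support ≤ #(p.support.erase 0) :=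
        card_le_card_of_injOn (· + 1)
          (fun n hn => mem_erase.mpr ⟨n.succ_ne_zero, of_mem_support_derivative hn⟩)
          (add_left_injective 1).injOn
    _ < #p.support := card_erase_lt_of_mem (mem_support_iff.mpr h)

theorem rootMultiplicity_lt_card_support {R : Type*} [CommRing R] [IsDomain R] [CharZero R]
    {p : R[X]} (hp : p ≠ 0) {r : R} (hr : r ≠ 0) : p.rootMultiplicity r < #p.support := by
  induction hn : p.natDegree using Nat.strong_induction_on generalizing p with
  | _ n ih =>
  by_cases h0 : p.coeff 0 = 0
  · obtain ⟨q, rfl⟩ := X_dvd_iff.mpr h0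
    have hq : q ≠ 0 := right_ne_zero_of_mul hp
    have hXr : rootMultiplicity r (X : R[X]) = 0 :=
      rootMultiplicity_eq_zero (by simpa using hr)
    rw [rootMultiplicity_mul hp, hXr, zero_add, card_support_X_mul]
    exact ih _ (by rw [← hn, natDegree_X_mul hq]; omega) hq rfl
  by_cases hd : derivative p = 0
  · have : p.rootMultiplicity r = 0 := by
      rw [eq_C_of_natDegree_eq_zero (derivative_eq_zero.mp hd),
        rootMultiplicity_C]
    rw [this]
    exact card_pos.mpr (support_nonempty.mpr hp)
  have hdeg : p.natDegree ≠ 0 := mt derivative_eq_zero.mpr hd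
  have := ih _ (hn ▸ natDegree_derivative_lt hdeg) hd rfl
  have := rootMultiplicity_sub_one_le_derivative_rootMultiplicity p r
  have := card_support_derivative_lt h0
  omega

theorem le_roots_of_map_le_roots_map {A B : Type*} [CommRing A] [IsDomain A]
    [CommRing B] [IsDomain B] {φ : A →+* B} (hφ : Function.Injective φ) {p : A[X]}
    {s : Multiset A} (hs : s.map φ ≤ (p.map φ).roots) : s ≤ p.roots := by
  refine Multiset.le_iff_count.mpr fun a => ?_
  rw [← Multiset.count_map_eq_count' φ s hφ, count_roots, eq_rootMultiplicity_map hφ,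
    ← count_roots]
  exact Multiset.le_iff_count.mp hs (φ a)

end Polynomial

/-- With `a i = v (f.coeff i)` and `x = v β`, these index the terms `f.coeff i * β ^ i` of least
valuation. -/
noncomputable def lowerEnvelopeIndices (s : Finset ℕ) (a : ℕ → ℝ) (x : ℝ) : Finset ℕ :=
  {i ∈ s | ∀ j ∈ s, a i + i * x ≤ a j + j * x}

section LowerEnvelope

variable {s : Finset ℕ} {a : ℕ → ℝ}

theorem le_of_mem_lowerEnvelopeIndices {x y : ℝ} (hxy : x < y) {i j : ℕ}
    (hi : i ∈ lowerEnvelopeIndices s a x) (hj : j ∈ lowerEnvelopeIndices s a y) : j ≤ i := by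
  simp only [lowerEnvelopeIndices, mem_filter] at hi hj
  have hx := hi.2 j hj.1
  have hy := hj.2 i hi.1
  have : (j : ℝ) ≤ i := by nlinarith
  exact_mod_cast this

theorem card_le_card_sub_one_of_one_lt_card_lowerEnvelopeIndices {X : Finset ℝ}
    (hX : ∀ x ∈ X, 1 < #(lowerEnvelopeIndices s a x)) : #X ≤ #s - 1 := by
  -- Lines lowest at a larger `x` are never steeper, so the steepest lowest line `top x` is
  -- strictly antitone on `X`; it is never the least index of `s`, as a second line is lowest too.
  set top : ℝ → ℕ := fun x => (lowerEnvelopeIndices s a x).sup id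
  have htop : ∀ x ∈ X, top x ∈ lowerEnvelopeIndices s a x ∧
      ∃ i ∈ lowerEnvelopeIndices s a x, i < top x := by
    intro x hx
    obtain ⟨i, hi, j, hj, hij⟩ := one_lt_card.mp (hX x hx)
    obtain ⟨k, hk, hk_eq⟩ := exists_mem_eq_sup _ ⟨i, hi⟩ id
    refine ⟨(show top x = k from hk_eq) ▸ hk, ?_⟩
    rcases hij.lt_or_gt with h | h
    · exact ⟨i, hi, h.trans_le (le_sup (f := id) hj)⟩
    · exact ⟨j, hj, h.trans_le (le_sup (f := id) hi)⟩
  rcases X.eq_empty_or_nonempty with rfl | ⟨x₀, hx₀⟩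
  · simp
  have hs : s.Nonempty := ⟨top x₀, (mem_filter.mp (htop x₀ hx₀).1).1⟩
  rw [← card_erase_of_mem (min'_mem s hs)]
  refine card_le_card_of_injOn top (fun x hx => ?_) ?_
  · obtain ⟨hmem, i, hi, hlt⟩ := htop x hx
    exact mem_erase.mpr ⟨((min'_le s i (mem_filter.mp hi).1).trans_lt hlt).ne',
      (mem_filter.mp hmem).1⟩
  · have hanti : StrictAntiOn top X := by
      intro x hx y hy hxy
      obtain ⟨i, hi, hlt⟩ := (htop x hx).2
      exact (le_of_mem_lowerEnvelopeIndices hxy hi (htop y hy).1).trans_lt hlt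
    exact hanti.injOn

end LowerEnvelope

theorem AddValuation.exists_ne_map_le_of_sum_eq_zero {R Γ₀ ι : Type*} [Ring R]
    [LinearOrderedAddCommMonoidWithTop Γ₀] (v : AddValuation R Γ₀) [DecidableEq ι]
    {s : Finset ι} {f : ι → R} (hsum : ∑ j ∈ s, f j = 0) {i : ι} (hi : i ∈ s)
    (hfi : v (f i) ≠ ⊤) : ∃ j ∈ s, j ≠ i ∧ v (f j) ≤ v (f i) := by
  by_contra! h
  have hlt : v (f i) < v (∑ j ∈ s.erase i, f j) :=
    v.map_lt_sum hfi fun j hj => h j (mem_of_mem_erase hj) (ne_of_mem_erase hj)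
  rw [← add_sum_erase s f hi, add_eq_zero_iff_eq_neg'] at hsum
  rw [hsum, v.map_neg] at hlt
  exact hlt.false

section Newton

variable {L : Type*} [Field L] (ν : AddValuation L (WithTop ℝ)) {f : L[X]}

theorem one_lt_card_lowerEnvelopeIndices_of_isRoot (hf : f ≠ 0) {β : L} (hβ : f.IsRoot β)
    (hβ0 : β ≠ 0) :
    1 < #(lowerEnvelopeIndices f.support (fun i => (ν (f.coeff i)).untop₀) ((ν β).untop₀)) := by
  set a : ℕ → ℝ := fun i => (ν (f.coeff i)).untop₀
  set x := (ν β).untop₀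
  have hterm : ∀ i ∈ f.support, ν (f.coeff i * β ^ i) = ((a i + i * x : ℝ) : WithTop ℝ) := by
    intro i hi
    rw [ν.map_mul, ν.map_pow, WithTop.coe_add, ← nsmul_eq_mul, WithTop.coe_nsmul,
      WithTop.coe_untop₀_of_ne_top (ν.ne_top_iff.mpr (mem_support_iff.mp hi)),
      WithTop.coe_untop₀_of_ne_top (ν.ne_top_iff.mpr hβ0)]
  obtain ⟨i, hi, hmin⟩ :=
    exists_min_image f.support (fun i => a i + i * x) (support_nonempty.mpr hf)
  have hsum : ∑ j ∈ f.support, f.coeff j * β ^ j = 0 := by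
    rw [← hβ.eq_zero, eval_eq_sum, Polynomial.sum_def]
  obtain ⟨j, hj, hji, hle⟩ := ν.exists_ne_map_le_of_sum_eq_zero hsum hi
    (by rw [hterm i hi]; exact WithTop.coe_ne_top)
  rw [hterm i hi, hterm j hj, WithTop.coe_le_coe] at hle
  have hmem : ∀ k ∈ f.support, a k + k * x ≤ a i + i * x → k ∈ lowerEnvelopeIndices f.support a x :=
    fun k hk hk_le => mem_filter.mpr ⟨hk, fun l hl => hk_le.trans (hmin l hl)⟩
  exact one_lt_card.mpr ⟨j, hmem j hj hle, i, hmem i hi le_rfl, hji⟩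

theorem card_image_valuation_le_card_support_sub_one (hf : f ≠ 0) {S : Finset L}
    (hS : ∀ β ∈ S, f.IsRoot β ∧ β ≠ 0) : #(S.image ν) ≤ #f.support - 1 := by
  have hX : S.image ν = (S.image fun β => (ν β).untop₀).image (↑) := by
    rw [image_image]
    refine image_congr fun β hβ => ?_
    exact (WithTop.coe_untop₀_of_ne_top (ν.ne_top_iff.mpr (hS β hβ).2)).symm
  rw [hX]
  refine card_image_le.trans <|
    card_le_card_sub_one_of_one_lt_card_lowerEnvelopeIndices (a := fun i => (ν (f.coeff i)).untop₀)
      fun x hx => ?_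
  obtain ⟨β, hβ, rfl⟩ := mem_image.mp hx
  exact one_lt_card_lowerEnvelopeIndices_of_isRoot ν hf (hS β hβ).1 (hS β hβ).2

theorem card_le_mul_card_support_sub_one (hf : f ≠ 0) {m : Multiset L} (hm : m ≤ f.roots)
    (hm0 : ∀ β ∈ m, β ≠ 0) {n : ℕ}
    (hn : ∀ c ∈ m, Multiset.card (m.filter fun β => ν c = ν β) ≤ n) :
    Multiset.card m ≤ n * (#f.support - 1) := by
  calc Multiset.card m = Multiset.card (m.map ν) := (Multiset.card_map _ _).symm
    _ ≤ n * #(m.map ν).toFinset := Multiset.card_le_mul_card_toFinset fun γ hγ => by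
        obtain ⟨c, hc, rfl⟩ := Multiset.mem_map.mp hγ
        rw [Multiset.count_map]
        exact hn c hc
    _ ≤ n * (#f.support - 1) := by
        rw [Multiset.toFinset_map]
        refine Nat.mul_le_mul_left n
          (card_image_valuation_le_card_support_sub_one ν hf fun β hβ => ?_)
        have hβ := Multiset.mem_toFinset.mp hβ
        exact ⟨(mem_roots hf).mp (Multiset.mem_of_le hm hβ), hm0 β hβ⟩

end Newton

theorem map_one_eq_zero_of_map_mul {L : Type*} [Field L] {v : L → WithTop ℝ}
    (hv0 : ∀ x, v x = ⊤ ↔ x = 0) (hvmul : ∀ x y, v (x * y) = v x + v y) : v 1 = 0 := by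
  have h1 : v 1 ≠ ⊤ := fun h => one_ne_zero ((hv0 1).mp h)
  have := hvmul 1 1
  rw [one_mul] at this
  exact ((WithTop.add_left_inj h1).mp (this.symm.trans (add_zero (v 1)).symm))

section ResidueField

variable {L : Type*} [Field L] {v : L → WithTop ℝ} (hv0 : ∀ x, v x = ⊤ ↔ x = 0)
  (hvmul : ∀ x y, v (x * y) = v x + v y) (hvadd : ∀ x y, min (v x) (v y) ≤ v (x + y))

noncomputable def addValuationOf : AddValuation L (WithTop ℝ) :=
  AddValuation.of v ((hv0 0).mpr rfl) (map_one_eq_zero_of_map_mul hv0 hvmul) hvadd hvmul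

local notation "ν" => addValuationOf hv0 hvmul hvadd

@[simp]
theorem addValuationOf_apply (x : L) : ν x = v x := rfl

local notation "𝒪" => valRing L v hv0 hvmul hvadd
local notation "𝔪" => valIdeal L v hv0 hvmul hvadd

theorem mem_valRing {x : L} : x ∈ 𝒪 ↔ 0 ≤ ν x := Iff.rfl

theorem mem_valIdeal {a : 𝒪} : a ∈ 𝔪 ↔ 0 < ν a := Iff.rfl

theorem valIdeal_isMaximal : Ideal.IsMaximal 𝔪 := by
  refine Ideal.isMaximal_iff.mpr ⟨fun h => ?_, fun J a hJ ha haJ => ?_⟩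
  · rw [mem_valIdeal, OneMemClass.coe_one, (ν).map_one] at h
    exact h.false
  have hva : ν a = 0 := le_antisymm (not_lt.mp ha) a.2
  have ha0 : (a : L) ≠ 0 := (ν).ne_top_iff.mp (by rw [hva]; exact WithTop.zero_ne_top)
  have hinv : (a : L)⁻¹ ∈ 𝒪 := by rw [mem_valRing, (ν).map_inv, hva, neg_zero]
  have : (⟨_, hinv⟩ : 𝒪) * a = 1 := Subtype.ext (inv_mul_cancel₀ ha0)
  exact this ▸ J.mul_mem_left _ haJ

theorem mk_ne_zero_of_valuation_eq_zero {a : 𝒪} (ha : ν a = 0) :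
    Ideal.Quotient.mk 𝔪 a ≠ 0 := by
  rw [Ne, Ideal.Quotient.eq_zero_iff_mem, mem_valIdeal, ha]
  exact lt_irrefl 0

theorem charZero_valResidue (hvint : ∀ n : ℤ, n ≠ 0 → v ((n : ℤ) : L) = 0) :
    CharZero (𝒪 ⧸ 𝔪) := by
  refine charZero_of_inj_zero fun n hn => ?_
  by_contra hn0
  rw [← map_natCast (Ideal.Quotient.mk 𝔪)] at hn
  refine mk_ne_zero_of_valuation_eq_zero hv0 hvmul hvadd ?_ hn
  simpa using hvint n (by exact_mod_cast hn0)

theorem exists_map_eq_C_mul_and_map_ne_zero {f : L[X]} (hf : f ≠ 0) :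
    ∃ d : L, d ≠ 0 ∧ ∃ H : 𝒪[X],
      H.map (𝒪).subtype = C d * f ∧ H.map (Ideal.Quotient.mk 𝔪) ≠ 0 := by
  have := valIdeal_isMaximal hv0 hvmul hvadd
  obtain ⟨i, hi, hmin⟩ :=
    exists_min_image f.support (fun i => ν (f.coeff i)) (support_nonempty.mpr hf)
  have hfi : f.coeff i ≠ 0 := mem_support_iff.mp hi
  -- dividing by the coefficient of least valuation makes `f` integral, with a coefficient `1`
  set d := (f.coeff i)⁻¹
  have hd : ν d + ν (f.coeff i) = 0 := by rw [← (ν).map_mul, inv_mul_cancel₀ hfi, (ν).map_one]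
  have hlifts : C d * f ∈ lifts (𝒪).subtype := by
    refine (lifts_iff_coeff_lifts _).mpr fun n => ⟨⟨(C d * f).coeff n, ?_⟩, rfl⟩
    rw [coeff_C_mul, mem_valRing, (ν).map_mul]
    by_cases hn : n ∈ f.support
    · exact hd ▸ add_le_add_right (hmin n hn) _
    · simp [notMem_support_iff.mp hn]
  obtain ⟨H, hH⟩ := (mem_lifts _).mp hlifts
  refine ⟨d, inv_ne_zero hfi, H, hH, fun h0 => ?_⟩
  have h1 : H.coeff i = 1 := Subtype.ext <| by
    simpa [coeff_map, d, hfi] using congr_arg (coeff · i) hH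
  simpa [coeff_map, h1] using congr_arg (coeff · i) h0

theorem exists_residue_roots_of_valuation_eq_zero {f : L[X]} (hf : f ≠ 0) {m : Multiset L}
    (hm : m ≤ f.roots) (hm0 : ∀ β ∈ m, ν β = 0) :
    ∃ g : (𝒪 ⧸ 𝔪)[X], g ≠ 0 ∧ #g.support ≤ #f.support ∧ ∃ w : Multiset (𝒪 ⧸ 𝔪),
      Multiset.card w = Multiset.card m ∧ (∀ r ∈ w, r ≠ 0) ∧
      ∀ r, w.count r ≤ g.rootMultiplicity r := by
  have := valIdeal_isMaximal hv0 hvmul hvadd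
  obtain ⟨d, hd, H, hH, hH0⟩ := exists_map_eq_C_mul_and_map_ne_zero hv0 hvmul hvadd hf
  lift m to Multiset 𝒪 using fun β hβ => (hm0 β hβ).symm.le
  refine ⟨H.map (Ideal.Quotient.mk 𝔪), hH0, ?_, m.map (Ideal.Quotient.mk 𝔪),
    Multiset.card_map _ _ |>.trans (Multiset.card_map _ _).symm, ?_, ?_⟩
  · calc #(H.map (Ideal.Quotient.mk 𝔪)).support ≤ #H.support :=
          card_le_card (support_map_subset _ _)
      _ = #(C d * f).support := by rw [← hH, support_map_of_injective _ Subtype.val_injective]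
      _ = #f.support := by congr 1; ext n; simp [coeff_C_mul, hd]
  · rintro _ hr
    obtain ⟨a, ha, rfl⟩ := Multiset.mem_map.mp hr
    exact mk_ne_zero_of_valuation_eq_zero hv0 hvmul hvadd (hm0 a (Multiset.mem_map_of_mem _ ha))
  · have hmH : m ≤ H.roots := le_roots_of_map_le_roots_map (φ := (𝒪).subtype)
      Subtype.val_injective (by rwa [hH, roots_C_mul _ hd])
    intro r
    rw [← count_roots]
    exact Multiset.le_iff_count.mp ((Multiset.map_le_map hmH).trans (map_roots_le hH0)) r

theorem exists_residue_roots {f : L[X]} (hf : f ≠ 0) {c : L} (hc : c ≠ 0) {m : Multiset L}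
    (hm : m ≤ f.roots) (hmc : ∀ β ∈ m, ν β = ν c) :
    ∃ g : (𝒪 ⧸ 𝔪)[X], g ≠ 0 ∧ #g.support ≤ #f.support ∧ ∃ w : Multiset (𝒪 ⧸ 𝔪),
      Multiset.card w = Multiset.card m ∧ (∀ r ∈ w, r ≠ 0) ∧
      ∀ r, w.count r ≤ g.rootMultiplicity r := by
  obtain ⟨g, hg, hsupp, w, hw, hw0, hwg⟩ := exists_residue_roots_of_valuation_eq_zero hv0 hvmul
    hvadd (scaleRoots_ne_zero hf c⁻¹) (m := m.map (c⁻¹ * ·))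
    (by rw [roots_scaleRoots _ (inv_ne_zero hc).isUnit]; exact Multiset.map_le_map hm)
    (by
      intro β hβ
      obtain ⟨γ, hγ, rfl⟩ := Multiset.mem_map.mp hβ
      rw [(ν).map_mul, hmc γ hγ, ← (ν).map_mul, inv_mul_cancel₀ hc, (ν).map_one])
  refine ⟨g, hg, hsupp.trans_eq ?_, w, hw.trans (Multiset.card_map _ _), hw0, hwg⟩
  rw [support_scaleRoots_eq _ (mem_nonZeroDivisors_of_ne_zero (inv_ne_zero hc))]

theorem card_le_of_residue_multiplicity_bound {t b : ℕ}
    (hK : ∀ g : (𝒪 ⧸ 𝔪)[X], g ≠ 0 → #g.support ≤ t + 1 →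
      ∀ S : Finset (𝒪 ⧸ 𝔪), (∀ r ∈ S, r ≠ 0) → ∑ r ∈ S, g.rootMultiplicity r ≤ b)
    {f : L[X]} (hf : f ≠ 0) (hsupp : #f.support ≤ t + 1) {c : L} (hc : c ≠ 0)
    {m : Multiset L} (hm : m ≤ f.roots) (hmc : ∀ β ∈ m, ν β = ν c) :
    Multiset.card m ≤ b := by
  obtain ⟨g, hg, hgsupp, w, hw, hw0, hwg⟩ := exists_residue_roots hv0 hvmul hvadd hf hc hm hmc
  calc Multiset.card m = ∑ r ∈ w.toFinset, w.count r := by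
        rw [← hw, Multiset.toFinset_sum_count_eq]
    _ ≤ ∑ r ∈ w.toFinset, g.rootMultiplicity r := sum_le_sum fun r _ => hwg r
    _ ≤ b := hK g hg (hgsupp.trans hsupp) _ fun r hr => hw0 r (Multiset.mem_toFinset.mp hr)

theorem card_le_of_residue_root_bound (hvint : ∀ n : ℤ, n ≠ 0 → v ((n : ℤ) : L) = 0)
    {t b : ℕ}
    (hK : ∀ g : (𝒪 ⧸ 𝔪)[X], g ≠ 0 → #g.support ≤ t + 1 →
      ∀ S : Finset (𝒪 ⧸ 𝔪), (∀ r ∈ S, r ≠ 0 ∧ g.eval r = 0) → #S ≤ b)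
    {f : L[X]} (hf : f ≠ 0) (hsupp : #f.support ≤ t + 1) {c : L} (hc : c ≠ 0)
    {m : Multiset L} (hm : m ≤ f.roots) (hmc : ∀ β ∈ m, ν β = ν c) :
    Multiset.card m ≤ t * b := by
  have := valIdeal_isMaximal hv0 hvmul hvadd
  have := charZero_valResidue hv0 hvmul hvadd hvint
  obtain ⟨g, hg, hgsupp, w, hw, hw0, hwg⟩ := exists_residue_roots hv0 hvmul hvadd hf hc hm hmc
  have hcount : ∀ r ∈ w, w.count r ≤ t := fun r hr => by
    have := (hwg r).trans_lt (rootMultiplicity_lt_card_support hg (hw0 r hr))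
    omega
  have hroots : #w.toFinset ≤ b := by
    refine hK g hg (hgsupp.trans hsupp) _ fun r hr => ?_
    have hr := Multiset.mem_toFinset.mp hr
    exact ⟨hw0 r hr,
      ((rootMultiplicity_pos hg).mp ((Multiset.count_pos.mpr hr).trans_le (hwg r))).eq_zero⟩
  calc Multiset.card m = Multiset.card w := hw.symm
    _ ≤ t * #w.toFinset := Multiset.card_le_mul_card_toFinset hcount
    _ ≤ t * b := Nat.mul_le_mul_left t hroots

end ResidueField

theorem roots_bound_sq_of_residue_bound_general (L : Type*) [Field L] (v : L → WithTop ℝ)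
    (hv0 : ∀ x, v x = ⊤ ↔ x = 0)
    (hvmul : ∀ x y, v (x * y) = v x + v y)
    (hvadd : ∀ x y, min (v x) (v y) ≤ v (x + y))
    (hvint : ∀ n : ℤ, n ≠ 0 → v ((n : ℤ) : L) = 0)
    (t b : ℕ) :
    ((∀ g : Polynomial
        ((valRing L v hv0 hvmul hvadd) ⧸ (valIdeal L v hv0 hvmul hvadd)),
      g ≠ 0 → g.support.card ≤ t + 1 →
      ∀ S : Finset ((valRing L v hv0 hvmul hvadd) ⧸ (valIdeal L v hv0 hvmul hvadd)),
        (∀ r ∈ S, r ≠ 0) → (∑ r ∈ S, g.rootMultiplicity r) ≤ b) →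
      ∀ f : Polynomial L, f ≠ 0 → f.support.card ≤ t + 1 →
        (f.roots.filter (fun r => r ≠ 0)).card ≤ t ^ 2 * b) ∧
    ((∀ g : Polynomial
        ((valRing L v hv0 hvmul hvadd) ⧸ (valIdeal L v hv0 hvmul hvadd)),
      g ≠ 0 → g.support.card ≤ t + 1 →
      ∀ S : Finset ((valRing L v hv0 hvmul hvadd) ⧸ (valIdeal L v hv0 hvmul hvadd)),
        (∀ r ∈ S, r ≠ 0 ∧ Polynomial.eval r g = 0) → S.card ≤ b) →
      ∀ f : Polynomial L, f ≠ 0 → f.support.card ≤ t + 1 →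
        (f.roots.toFinset.filter (fun r => r ≠ 0)).card ≤ t ^ 2 * b) := by
  set ν := addValuationOf hv0 hvmul hvadd
  refine ⟨fun hK f hf hsupp => ?_, fun hK f hf hsupp => ?_⟩
  · calc Multiset.card (f.roots.filter (· ≠ 0)) ≤ b * (#f.support - 1) :=
          card_le_mul_card_support_sub_one ν hf (Multiset.filter_le _ _)
            (fun β hβ => (Multiset.mem_filter.mp hβ).2) fun c hc =>
            card_le_of_residue_multiplicity_bound hv0 hvmul hvadd hK hf hsupp
              (Multiset.mem_filter.mp hc).2
              ((Multiset.filter_le _ _).trans (Multiset.filter_le _ _))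
              fun β hβ => (Multiset.mem_filter.mp hβ).2.symm
      _ ≤ b * t := Nat.mul_le_mul_left b (by omega)
      _ ≤ t ^ 2 * b := by
          rw [mul_comm]
          exact Nat.mul_le_mul_right b (Nat.le_self_pow two_ne_zero t)
  · set S := f.roots.toFinset.filter (· ≠ 0)
    have hS : S.val ≤ f.roots := (Multiset.filter_le _ _).trans (Multiset.dedup_le _)
    calc #S ≤ t * b * (#f.support - 1) :=
          card_le_mul_card_support_sub_one ν hf hS (fun β hβ => (mem_filter.mp hβ).2)
            fun c hc => card_le_of_residue_root_bound hv0 hvmul hvadd hvint hK hf hsupp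
              (mem_filter.mp hc).2 ((Multiset.filter_le _ _).trans hS)
              fun β hβ => (Multiset.mem_filter.mp hβ).2.symm
      _ ≤ t * b * t := Nat.mul_le_mul_left _ (by omega)
      _ = t ^ 2 * b := by ring

/-- Let `L` be a field with non-archimedean additive valuation
`v : L → ℝ ∪ {∞}` satisfying `v(n·1) = 0` for all nonzero integers `n`, with
valuation ring `A`, maximal ideal `M` and residue field `K = A/M`, and let
`t ≥ 1`.  If every nonzero polynomial over `K` with at most `t+1` terms has at
most `b` nonzero roots counted with multiplicities (resp. distinct), then every
nonzero polynomial over `L` with at most `t+1` terms has at most `t²·b` nonzero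
roots counted with multiplicities (resp. distinct):
`B_m(t,L) ≤ t²·B_m(t,K)` and `B₁(t,L) ≤ t²·B₁(t,K)`. -/
theorem roots_bound_sq_of_residue_bound (L : Type*) [Field L] (v : L → WithTop ℝ)
    (hv0 : ∀ x, v x = ⊤ ↔ x = 0)
    (hvmul : ∀ x y, v (x * y) = v x + v y)
    (hvadd : ∀ x y, min (v x) (v y) ≤ v (x + y))
    (hvint : ∀ n : ℤ, n ≠ 0 → v ((n : ℤ) : L) = 0)
    (t b : ℕ) (ht : 1 ≤ t) :
    ((∀ g : Polynomial
        ((valRing L v hv0 hvmul hvadd) ⧸ (valIdeal L v hv0 hvmul hvadd)),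
      g ≠ 0 → g.support.card ≤ t + 1 →
      ∀ S : Finset ((valRing L v hv0 hvmul hvadd) ⧸ (valIdeal L v hv0 hvmul hvadd)),
        (∀ r ∈ S, r ≠ 0) → (∑ r ∈ S, g.rootMultiplicity r) ≤ b) →
      ∀ f : Polynomial L, f ≠ 0 → f.support.card ≤ t + 1 →
        (f.roots.filter (fun r => r ≠ 0)).card ≤ t ^ 2 * b) ∧
    ((∀ g : Polynomial
        ((valRing L v hv0 hvmul hvadd) ⧸ (valIdeal L v hv0 hvmul hvadd)),
      g ≠ 0 → g.support.card ≤ t + 1 →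
      ∀ S : Finset ((valRing L v hv0 hvmul hvadd) ⧸ (valIdeal L v hv0 hvmul hvadd)),
        (∀ r ∈ S, r ≠ 0 ∧ Polynomial.eval r g = 0) → S.card ≤ b) →
      ∀ f : Polynomial L, f ≠ 0 → f.support.card ≤ t + 1 →
        (f.roots.toFinset.filter (fun r => r ≠ 0)).card ≤ t ^ 2 * b) :=
  roots_bound_sq_of_residue_bound_general L v hv0 hvmul hvadd hvint t b
end
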